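/- Let 𝒯 be the probability distribution on simple graphs with vertex set {1,2,3} that picks uniformly at random one of the three graphs having exactly one edge. Then 𝒯 is subgraph independent, but 𝒯 is not the induced distribution of any coloring model on 3 vertices. -/

import Mathlib

open scoped Classical

noncomputable def pr {n : ℕ} (μ : SimpleGraph (Fin n) → ℝ) (P : SimpleGraph (Fin n) → Prop) : ℝ :=
  ∑ G : SimpleGraph (Fin n), if P G then μ G else 0

def IsDist {n : ℕ} (μ : SimpleGraph (Fin n) → ℝ) : Prop :=
  (∀ G, 0 ≤ μ G) ∧ ∑ G : SimpleGraph (Fin n), μ G = 1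

def SubgraphIndep {n : ℕ} (μ : SimpleGraph (Fin n) → ℝ) : Prop :=
  ∀ V W : Set (Fin n), Disjoint V W →
    ∀ (HV : SimpleGraph V) (HW : SimpleGraph W),
      pr μ (fun G => G.induce V = HV ∧ G.induce W = HW)
        = pr μ (fun G => G.induce V = HV) * pr μ (fun G => G.induce W = HW)

structure ColoringModel (n : ℕ) where
  Ω : Fin n → Type
  fin : ∀ v, Fintype (Ω v)
  p : ∀ v, Ω v → ℝ
  nonneg : ∀ v ω, 0 ≤ p v ω
  sum_one : ∀ v, ∑ ω ∈ @Finset.univ (Ω v) (fin v), p v ω = 1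
  f : ∀ u v : Fin n, Ω u → Ω v → Bool
  symm : ∀ u v x y, f u v x y = f v u y x

def ColoringModel.graph {n : ℕ} (M : ColoringModel n) (ω : ∀ v, M.Ω v) :
    SimpleGraph (Fin n) where
  Adj u v := u ≠ v ∧ M.f u v (ω u) (ω v) = true
  symm := ⟨by
    rintro u v ⟨h1, h2⟩
    refine ⟨h1.symm, ?_⟩
    rw [M.symm]
    exact h2⟩
  loopless := ⟨fun u h => h.1 rfl⟩

noncomputable def ColoringModel.pr {n : ℕ} (M : ColoringModel n)
    (P : SimpleGraph (Fin n) → Prop) : ℝ :=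
  letI := M.fin
  ∑ ω : (∀ v, M.Ω v), if P (M.graph ω) then ∏ v, M.p v (ω v) else 0

noncomputable def ColoringModel.dist {n : ℕ} (M : ColoringModel n)
    (G : SimpleGraph (Fin n)) : ℝ :=
  M.pr (fun H => H = G)

noncomputable def T3 : SimpleGraph (Fin 3) → ℝ :=
  fun G => if Nat.card G.edgeSet = 1 then 1 / 3 else 0

/-!
On at most three vertices any two disjoint vertex sets include one with at most one vertex, whose
induced subgraph is forced; so every distribution on three vertices is subgraph independent.

Suppose a coloring model induced `T3`. Every coloring of positive weight yields exactly one edge,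
and each of the three edges is realised by some coloring of positive weight: `x` with edge `01`,
`y` with edge `02`, `z` with edge `12`. Since colorings of positive weight may be mixed vertexwise,
the triples `(y₀, x₁, y₂)`, `(x₀, x₁, z₂)`, `(y₀, z₁, z₂)` show that `(y₀, x₁, z₂)` has no edge.
-/

theorem Set.subsingleton_or_subsingleton_of_disjoint {α : Type*} [Finite α] (hα : Nat.card α ≤ 3)
    {V W : Set α} (h : Disjoint V W) : V.Subsingleton ∨ W.Subsingleton := by
  by_contra! hVW
  rw [← Set.one_lt_ncard_iff_nontrivial, ← Set.one_lt_ncard_iff_nontrivial] at hVW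
  have := (Set.ncard_union_eq h).symm.trans_le (Set.ncard_le_card (V ∪ W))
  omega

theorem subgraphIndep_of_le_three {n : ℕ} (hn : n ≤ 3) {μ : SimpleGraph (Fin n) → ℝ}
    (hμ : ∑ G, μ G = 1) : SubgraphIndep μ := by
  intro V W hVW HV HW
  rcases Set.subsingleton_or_subsingleton_of_disjoint (by simpa using hn) hVW with hV | hW
  · have : Subsingleton V := hV.coe_sort
    simp [pr, Subsingleton.elim _ HV, hμ]
  · have : Subsingleton W := hW.coe_sort
    simp [pr, Subsingleton.elim _ HW, hμ]

namespace SimpleGraph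

theorem edgeSet_fromEdgeSet_singleton {V : Type*} {e : Sym2 V} (he : ¬e.IsDiag) :
    (fromEdgeSet {e}).edgeSet = {e} := by
  rw [edgeSet_fromEdgeSet]
  exact (Set.disjoint_singleton_left.2 he).sdiff_eq_left

theorem bijective_fromEdgeSet_singleton (V : Type*) :
    Function.Bijective fun e : {e : Sym2 V // ¬e.IsDiag} =>
      (⟨fromEdgeSet {e.1}, by simp [edgeSet_fromEdgeSet_singleton e.2]⟩ :
        {G : SimpleGraph V // Nat.card G.edgeSet = 1}) := by
  constructor
  · rintro ⟨e, he⟩ ⟨e', he'⟩ h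
    have := congrArg (fun G : {G : SimpleGraph V // _} => G.1.edgeSet) h
    simpa [edgeSet_fromEdgeSet_singleton he, edgeSet_fromEdgeSet_singleton he'] using this
  · rintro ⟨G, hG⟩
    obtain ⟨e, he⟩ := Set.ncard_eq_one.1 ((Nat.card_coe_set_eq _).symm.trans hG)
    have hdiag : ¬e.IsDiag := G.not_isDiag_of_mem_edgeSet (he ▸ rfl)
    refine ⟨⟨e, hdiag⟩, Subtype.ext ?_⟩
    rw [← edgeSet_inj, edgeSet_fromEdgeSet_singleton hdiag, he]

theorem card_subtype_card_edgeSet_eq_one (V : Type*) [Fintype V] :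
    Nat.card {G : SimpleGraph V // Nat.card G.edgeSet = 1} = (Fintype.card V).choose 2 := by
  rw [← Nat.card_congr (Equiv.ofBijective _ (bijective_fromEdgeSet_singleton V)),
    Nat.card_eq_fintype_card, Sym2.card_subtype_not_diag]

theorem card_edgeSet_fin_three (G : SimpleGraph (Fin 3)) :
    Nat.card G.edgeSet =
      (if G.Adj 0 1 then 1 else 0) + (if G.Adj 0 2 then 1 else 0) + (if G.Adj 1 2 then 1 else 0) := by
  have hG : G.edgeSet =
      {e ∈ ({s(0, 1), s(0, 2), s(1, 2)} : Finset (Sym2 (Fin 3))) | e ∈ G.edgeSet} := by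
    ext e
    induction e with
    | h u v => fin_cases u <;> fin_cases v <;> simp [G.adj_comm 1 0, G.adj_comm 2 0, G.adj_comm 2 1]
  rw [hG, Nat.card_coe_set_eq, Set.ncard_coe_finset, Finset.card_filter,
    Finset.sum_insert (by decide), Finset.sum_insert (by decide), Finset.sum_singleton, add_assoc]
  simp only [mem_edgeSet]

end SimpleGraph

theorem Bool.exists_toNat_add_toNat_add_toNat_ne_one {α β γ : Type*}
    (f : α → β → Bool) (g : α → γ → Bool) (h : β → γ → Bool)
    (hf : ∃ a b, f a b) (hg : ∃ a c, g a c) (hh : ∃ b c, h b c) :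
    ∃ a b c, (f a b).toNat + (g a c).toNat + (h b c).toNat ≠ 1 := by
  obtain ⟨a₁, b₁, hab⟩ := hf
  obtain ⟨a₂, c₂, hac⟩ := hg
  obtain ⟨b₃, c₃, hbc⟩ := hh
  by_contra! hone
  have h₁ := hone a₁ b₁ c₃
  have h₂ := hone a₂ b₁ c₂
  have h₃ := hone a₂ b₃ c₃
  have h₄ := hone a₂ b₁ c₃
  grind

theorem sum_T3 : ∑ G, T3 G = 1 := by
  simp only [T3, Finset.sum_ite, Finset.sum_const_zero, add_zero, Finset.sum_const]
  rw [← Fintype.card_subtype, ← Nat.card_eq_fintype_card,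
    SimpleGraph.card_subtype_card_edgeSet_eq_one]
  norm_num

theorem T3_ne_zero_iff {G : SimpleGraph (Fin 3)} : T3 G ≠ 0 ↔ Nat.card G.edgeSet = 1 := by
  simp [T3]

theorem T3_edge {u v : Fin 3} (huv : u ≠ v) : T3 (SimpleGraph.edge u v) = 1 / 3 := by
  simp [T3, SimpleGraph.edgeSet_edge_of_ne huv]

namespace ColoringModel

attribute [local instance] ColoringModel.fin

section

variable {n : ℕ} (M : ColoringModel n)

theorem graph_adj {ω : ∀ v, M.Ω v} {u v : Fin n} :
    (M.graph ω).Adj u v ↔ u ≠ v ∧ M.f u v (ω u) (ω v) = true :=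
  Iff.rfl

theorem prod_le_dist_graph (ω : ∀ v, M.Ω v) : ∏ v, M.p v (ω v) ≤ M.dist (M.graph ω) := by
  have hle := Finset.single_le_sum (s := Finset.univ) (a := ω)
    (f := fun ω' => if M.graph ω' = M.graph ω then ∏ v, M.p v (ω' v) else 0)
    (fun ω' _ => by split_ifs <;> simp [Finset.prod_nonneg, M.nonneg])
    (Finset.mem_univ ω)
  simpa [dist, ColoringModel.pr] using hle

theorem exists_graph_eq_of_dist_ne_zero {G : SimpleGraph (Fin n)} (hG : M.dist G ≠ 0) :
    ∃ ω : ∀ v, M.Ω v, M.graph ω = G ∧ ∀ v, 0 < M.p v (ω v) := by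
  obtain ⟨ω, -, hω⟩ := Finset.exists_ne_zero_of_sum_ne_zero hG
  by_cases hωG : M.graph ω = G
  · rw [if_pos hωG, Finset.prod_ne_zero_iff] at hω
    exact ⟨ω, hωG, fun v => (M.nonneg v (ω v)).lt_of_ne' (hω v (Finset.mem_univ v))⟩
  · simp [hωG] at hω

end

variable (M : ColoringModel 3)

def color3 (x₀ : M.Ω 0) (x₁ : M.Ω 1) (x₂ : M.Ω 2) : ∀ v, M.Ω v
  | 0 => x₀
  | 1 => x₁
  | 2 => x₂

theorem card_edgeSet_graph_color3 (x₀ : M.Ω 0) (x₁ : M.Ω 1) (x₂ : M.Ω 2) :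
    Nat.card (M.graph (M.color3 x₀ x₁ x₂)).edgeSet =
      (M.f 0 1 x₀ x₁).toNat + (M.f 0 2 x₀ x₂).toNat + (M.f 1 2 x₁ x₂).toNat := by
  rw [SimpleGraph.card_edgeSet_fin_three]
  simp [graph_adj, color3, Bool.toNat, Bool.cond_eq_ite]

theorem card_edgeSet_graph_eq_one_of_dist_eq_T3 (hM : ∀ G, M.dist G = T3 G)
    {ω : ∀ v, M.Ω v} (hω : ∀ v, 0 < M.p v (ω v)) : Nat.card (M.graph ω).edgeSet = 1 := by
  refine T3_ne_zero_iff.1 (ne_of_gt ?_)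
  calc 0 < ∏ v, M.p v (ω v) := Finset.prod_pos fun v _ => hω v
    _ ≤ T3 (M.graph ω) := hM (M.graph ω) ▸ M.prod_le_dist_graph ω

theorem exists_pos_f_eq_true_of_dist_eq_T3 (hM : ∀ G, M.dist G = T3 G) {u v : Fin 3}
    (huv : u ≠ v) : ∃ ω : ∀ w, M.Ω w, (∀ w, 0 < M.p w (ω w)) ∧ M.f u v (ω u) (ω v) = true := by
  obtain ⟨ω, hω, hpos⟩ := M.exists_graph_eq_of_dist_ne_zero (G := SimpleGraph.edge u v)
    (by rw [hM, T3_edge huv]; norm_num)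
  refine ⟨ω, hpos, (M.graph_adj.1 (hω ▸ ?_)).2⟩
  simp [SimpleGraph.edge_adj, huv]

theorem not_dist_eq_T3 : ¬ ∀ G, M.dist G = T3 G := by
  intro hM
  obtain ⟨ω₀₁, hω₀₁, h₀₁⟩ := M.exists_pos_f_eq_true_of_dist_eq_T3 hM (u := 0) (v := 1) (by decide)
  obtain ⟨ω₀₂, hω₀₂, h₀₂⟩ := M.exists_pos_f_eq_true_of_dist_eq_T3 hM (u := 0) (v := 2) (by decide)
  obtain ⟨ω₁₂, hω₁₂, h₁₂⟩ := M.exists_pos_f_eq_true_of_dist_eq_T3 hM (u := 1) (v := 2) (by decide)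
  obtain ⟨x₀, x₁, x₂, hx⟩ := Bool.exists_toNat_add_toNat_add_toNat_ne_one
    (α := {x // 0 < M.p 0 x}) (β := {x // 0 < M.p 1 x}) (γ := {x // 0 < M.p 2 x})
    (fun x₀ x₁ => M.f 0 1 x₀ x₁) (fun x₀ x₂ => M.f 0 2 x₀ x₂) (fun x₁ x₂ => M.f 1 2 x₁ x₂)
    ⟨⟨_, hω₀₁ 0⟩, ⟨_, hω₀₁ 1⟩, h₀₁⟩ ⟨⟨_, hω₀₂ 0⟩, ⟨_, hω₀₂ 2⟩, h₀₂⟩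
    ⟨⟨_, hω₁₂ 1⟩, ⟨_, hω₁₂ 2⟩, h₁₂⟩
  have hpos : ∀ v, 0 < M.p v (M.color3 x₀ x₁ x₂ v) := by
    intro v
    fin_cases v
    exacts [x₀.2, x₁.2, x₂.2]
  exact hx (M.card_edgeSet_graph_color3 .. ▸ M.card_edgeSet_graph_eq_one_of_dist_eq_T3 hM hpos)

end ColoringModel

theorem T3_subgraph_indep_not_coloring :
    SubgraphIndep T3 ∧ ¬ ∃ M : ColoringModel 3, ∀ G, M.dist G = T3 G :=
  ⟨subgraphIndep_of_le_three le_rfl sum_T3, fun ⟨M, hM⟩ => M.not_dist_eq_T3 hM⟩
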